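/- arXiv:2305.17508 — 3 statements merged into one kernel-verified Lean document; each statement's English description precedes it below -/
import Mathlib

section
/- Pointwise algebraic form of Theorem 4.1 (nonexistence of a g-generated Yamabe almost soliton with vertical potential on a Sasaki-like manifold): Let (φ, ξ, η, g) be an accR structure on a real vector space V of dimension 2n+1 with n ≥ 1. Suppose α is a linear functional on V and k, c are real numbers such that (1/2)(α(x)η(y) + α(y)η(x)) − k·g(x, φy) = c·g(x, y) for all x, y ∈ V. Then k = 0 and c = 0. -/
/-- pointwise form of Theorem 4.1: On a (2n+1)-dimensional accR
vector space (n ≥ 1), if a linear functional α and reals k, c satisfy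
(1/2)(α(x)η(y) + α(y)η(x)) − k·g(x, φy) = c·g(x, y) for all x, y, then
k = 0 and c = 0. -/
theorem accR_no_Sasaki_like_Yamabe_soliton_g
    {V : Type*} [AddCommGroup V] [Module ℝ V] [FiniteDimensional ℝ V]
    (n : ℕ) (hn : 1 ≤ n)
    (hdim : Module.finrank ℝ V = 2 * n + 1)
    (φ : V →ₗ[ℝ] V) (ξ : V) (η : V →ₗ[ℝ] ℝ) (g : V →ₗ[ℝ] V →ₗ[ℝ] ℝ)
    (hgsymm : ∀ x y : V, g x y = g y x)
    (hgnd : ∀ x : V, (∀ y : V, g x y = 0) → x = 0)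
    (hφξ : φ ξ = 0)
    (hφφ : ∀ x : V, φ (φ x) = -x + η x • ξ)
    (hηφ : ∀ x : V, η (φ x) = 0)
    (hηξ : η ξ = 1)
    (hgφ : ∀ x y : V, g (φ x) (φ y) = - g x y + η x * η y)
    (α : V →ₗ[ℝ] ℝ) (k c : ℝ)
    (hsol : ∀ x y : V,
      (1 / 2) * (α x * η y + α y * η x) - k * g x (φ y) = c * g x y) :
    k = 0 ∧ c = 0 := by
  -- g x ξ = η x
  have hgξ : ∀ x : V, g x ξ = η x := by
    intro x
    have h := hgφ x ξ
    rw [hφξ, hηξ] at h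
    simp at h
    linarith
  -- α ξ = c
  have hαξ : α ξ = c := by
    have h := hsol ξ ξ
    rw [hφξ, hηξ, hgξ, hηξ] at h
    simp at h
    linarith
  -- α x = c * η x
  have hα : ∀ x : V, α x = c * η x := by
    intro x
    have h := hsol x ξ
    rw [hφξ, hηξ, hgξ, hαξ] at h
    simp at h
    linarith
  -- E1
  have E1 : ∀ x y : V, c * (η x * η y) - k * g x (φ y) = c * g x y := by
    intro x y
    have h := hsol x y
    rw [hα x, hα y] at h
    ring_nf at h ⊢
    linarith
  -- E2 : apply E1 at (x, φ y)
  have E2 : ∀ x y : V, k * g x y - k * (η x * η y) = c * g x (φ y) := by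
    intro x y
    have h := E1 x (φ y)
    rw [hηφ, hφφ] at h
    have hgx : g x (-y + η y • ξ) = - g x y + η y * η x := by
      rw [map_add, map_neg, map_smul, hgξ]
      simp [mul_comm]
    rw [hgx] at h
    ring_nf at h ⊢
    linarith
  -- combine: (k²+c²)(g x y − η x η y) = 0
  have key : ∀ x y : V, (k ^ 2 + c ^ 2) * (g x y - η x * η y) = 0 := by
    intro x y
    have h1 := E1 x y
    have h2 := E2 x y
    linear_combination k * h2 - c * h1
  -- k² + c² = 0
  have hkc : k ^ 2 + c ^ 2 = 0 := by
    by_contra h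
    have hg : ∀ x y : V, g x y = η x * η y := by
      intro x y
      have := key x y
      have := mul_eq_zero.mp this
      rcases this with h' | h'
      · exact absurd h' h
      · linarith
    -- find nonzero x₀ in ker η
    have hker : LinearMap.ker η ≠ ⊥ := by
      intro hb
      have hrk := LinearMap.finrank_range_add_finrank_ker η
      have h1 : Module.finrank ℝ (LinearMap.range η) ≤ 1 := by
        have := Submodule.finrank_le (LinearMap.range η)
        simpa [Module.finrank_self] using this
      have h2 : Module.finrank ℝ (LinearMap.ker η) = 0 := by
        rw [hb]; simp
      rw [h2, hdim] at hrk
      omega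
    obtain ⟨x₀, hx₀mem, hx₀⟩ := Submodule.ne_bot_iff _ |>.mp hker
    have hηx₀ : η x₀ = 0 := hx₀mem
    have : x₀ = 0 := by
      apply hgnd
      intro y
      rw [hg, hηx₀, zero_mul]
    exact hx₀ this
  constructor <;> nlinarith [sq_nonneg k, sq_nonneg c]
end

section
/- Pointwise algebraic form of Theorem 5.1: Let (φ, ξ, η, g) be an accR structure on a real vector space V of dimension 2n+1 with n ≥ 1. Suppose α is a linear functional on V and f, c are real numbers such that (1/2)(α(x)η(y) + α(y)η(x)) − f·g(φx, φy) = c·g(x, y) for all x, y ∈ V. Then f = c and α(ξ) = c. -/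
/-- pointwise form of Theorem 5.1: On a (2n+1)-dimensional accR
vector space (n ≥ 1), if a linear functional α and reals f, c satisfy
(1/2)(α(x)η(y) + α(y)η(x)) − f·g(φx, φy) = c·g(x, y) for all x, y, then
f = c and α(ξ) = c. -/
theorem accR_Yamabe_soliton_torse_forming_g
    {V : Type*} [AddCommGroup V] [Module ℝ V] [FiniteDimensional ℝ V]
    (n : ℕ) (hn : 1 ≤ n)
    (hdim : Module.finrank ℝ V = 2 * n + 1)
    (φ : V →ₗ[ℝ] V) (ξ : V) (η : V →ₗ[ℝ] ℝ) (g : V →ₗ[ℝ] V →ₗ[ℝ] ℝ)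
    (hgsymm : ∀ x y : V, g x y = g y x)
    (hgnd : ∀ x : V, (∀ y : V, g x y = 0) → x = 0)
    (hφξ : φ ξ = 0)
    (hφφ : ∀ x : V, φ (φ x) = -x + η x • ξ)
    (hηφ : ∀ x : V, η (φ x) = 0)
    (hηξ : η ξ = 1)
    (hgφ : ∀ x y : V, g (φ x) (φ y) = - g x y + η x * η y)
    (α : V →ₗ[ℝ] ℝ) (f c : ℝ)
    (hsol : ∀ x y : V,
      (1 / 2) * (α x * η y + α y * η x) - f * g (φ x) (φ y) = c * g x y) :
    f = c ∧ α ξ = c := by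
  -- g(x, ξ) = η x
  have hgξ : ∀ x : V, g x ξ = η x := by
    intro x
    have h := hgφ x ξ
    rw [hφξ] at h
    simp [hηξ] at h
    linarith
  -- α ξ = c
  have hαξ : α ξ = c := by
    have h := hsol ξ ξ
    rw [hφξ, hgξ, hηξ] at h
    simp at h
    linarith
  -- α x = c * η x
  have hα : ∀ x : V, α x = c * η x := by
    intro x
    have h := hsol x ξ
    rw [hφξ, hgξ, hηξ, hαξ] at h
    simp at h
    linarith
  refine ⟨?_, hαξ⟩
  by_contra hfc
  -- then g(φx, φy) = 0 for all x y
  have hzero : ∀ x y : V, g (φ x) (φ y) = 0 := by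
    intro x y
    have h := hsol x y
    rw [hα x, hα y, hgφ x y] at h
    have h2 : (c - f) * (- g x y + η x * η y) = 0 := by ring_nf; ring_nf at h; linarith
    have : c - f ≠ 0 := sub_ne_zero.mpr (fun h => hfc h.symm)
    have h3 : - g x y + η x * η y = 0 := by
      rcases mul_eq_zero.mp h2 with h' | h'
      · exact absurd h' this
      · exact h'
    rw [hgφ x y, h3]
  -- hence φ x = 0 for all x
  have hφ0 : ∀ x : V, φ x = 0 := by
    intro x
    apply hgnd
    intro y
    have hy : y = - φ (φ y) + η y • ξ := by rw [hφφ y]; abel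
    rw [hy]
    simp only [map_add, map_neg, map_smul]
    rw [hgsymm (φ x) (φ (φ y))]
    rw [hzero (φ y) x, hgξ (φ x), hηφ x]
    simp
  -- then V is spanned by ξ, contradiction with dim
  have hspan : ∀ w : V, ∃ r : ℝ, r • ξ = w := by
    intro w
    refine ⟨η w, ?_⟩
    have h := hφφ w
    rw [hφ0 (φ w)] at h
    exact (neg_add_eq_zero.mp h.symm).symm
  have hle : Module.finrank ℝ V ≤ 1 := finrank_le_one ξ hspan
  omega
end

section
/- Pointwise algebraic form of Theorem 5.3 (the g̃-version of Theorem 5.1): Let (φ, ξ, η, g) be an accR structure on a real vector space V of dimension 2n+1 with n ≥ 1, and let g̃(x, y) = g(x, φy) + η(x)η(y) be the associated metric. Suppose α is a linear functional on V and f, c are real numbers such that (1/2)(α(x)η(y) + α(y)η(x)) − f·g̃(φx, φy) = c·g̃(x, y) for all x, y ∈ V. Then f = c and α(ξ) = c. -/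
/-- pointwise form of Theorem 5.3: On a (2n+1)-dimensional accR
vector space (n ≥ 1) with associated metric g̃(x,y) = g(x, φy) + η(x)η(y),
if a linear functional α and reals f, c satisfy
(1/2)(α(x)η(y) + α(y)η(x)) − f·g̃(φx, φy) = c·g̃(x, y) for all x, y, then
f = c and α(ξ) = c. -/
theorem accR_Yamabe_soliton_torse_forming_tg
    {V : Type*} [AddCommGroup V] [Module ℝ V] [FiniteDimensional ℝ V]
    (n : ℕ) (hn : 1 ≤ n)
    (hdim : Module.finrank ℝ V = 2 * n + 1)
    (φ : V →ₗ[ℝ] V) (ξ : V) (η : V →ₗ[ℝ] ℝ) (g : V →ₗ[ℝ] V →ₗ[ℝ] ℝ)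
    (hgsymm : ∀ x y : V, g x y = g y x)
    (hgnd : ∀ x : V, (∀ y : V, g x y = 0) → x = 0)
    (hφξ : φ ξ = 0)
    (hφφ : ∀ x : V, φ (φ x) = -x + η x • ξ)
    (hηφ : ∀ x : V, η (φ x) = 0)
    (hηξ : η ξ = 1)
    (hgφ : ∀ x y : V, g (φ x) (φ y) = - g x y + η x * η y)
    (tg : V → V → ℝ)
    (htg : ∀ x y : V, tg x y = g x (φ y) + η x * η y)
    (α : V →ₗ[ℝ] ℝ) (f c : ℝ)
    (hsol : ∀ x y : V,
      (1 / 2) * (α x * η y + α y * η x) - f * tg (φ x) (φ y) = c * tg x y) :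
    f = c ∧ α ξ = c := by
  -- g(x, ξ) = η x
  have hgξ : ∀ x : V, g x ξ = η x := by
    intro x
    have h := hgφ x ξ
    rw [hφξ, hηξ] at h
    simp at h
    linarith [h]
  -- g(φx, ξ) = 0
  have hgφξ : ∀ x : V, g (φ x) ξ = 0 := by
    intro x; rw [hgξ, hηφ]
  -- B-symmetry: g(φ x) y = g x (φ y)
  have hB : ∀ x y : V, g (φ x) y = g x (φ y) := by
    intro x y
    have h1 := hgφ x (φ y)
    rw [hηφ] at h1
    have h2 : g (φ x) (φ (φ y)) = - g (φ x) y + η y * g (φ x) ξ := by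
      rw [hφφ y]; simp [hgsymm]
    rw [hgφξ] at h2
    rw [h2] at h1
    linarith
  -- tg(φx, φy) = - g x (φ y)
  have htgφ : ∀ x y : V, tg (φ x) (φ y) = - g x (φ y) := by
    intro x y
    rw [htg, hηφ, hηφ]
    have : g (φ x) (φ (φ y)) = - g x (φ y) + η x * η (φ y) := hgφ x (φ y)
    rw [hηφ] at this
    simp [this]
  -- α ξ = c
  have hαξ : α ξ = c := by
    have h := hsol ξ ξ
    rw [htgφ, hφξ, htg, hφξ, hηξ] at h
    simp at h
    linarith
  constructor
  · by_contra hfc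
    have hφ0 : ∀ u : V, φ u = 0 := by
      intro u
      apply hgnd
      intro v
      have h := hsol (φ u) (φ v)
      rw [htgφ, htg] at h
      rw [hηφ, hηφ] at h
      have e1 : g (φ (φ u)) (φ (φ v)) = - g (φ u) (φ v) + η (φ u) * η (φ v) := hgφ (φ u) (φ v)
      rw [hηφ, hηφ] at e1
      have e2 : g (φ u) (φ v) = - g u v + η u * η v := hgφ u v
      have e3 : g (φ u) (φ (φ v)) = - g u (φ v) + η u * η (φ v) := hgφ u (φ v)
      rw [hηφ] at e3
      rw [e3] at h
      simp at h
      have : g u (φ v) = 0 := by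
        rcases h with h' | h'
        · exact absurd h' hfc
        · linarith
      rw [← hB] at this
      rw [hgsymm]
      rw [hgsymm] at this
      exact this
    -- every x = η x • ξ
    have hx : ∀ x : V, x = η x • ξ := by
      intro x
      have := hφφ x
      rw [hφ0 x, map_zero] at this
      have : (0 : V) = -x + η x • ξ := this
      linear_combination (norm := module) this
    have hspan : Submodule.span ℝ ({ξ} : Set V) = ⊤ := by
      rw [eq_top_iff]
      intro x _
      rw [hx x]
      exact Submodule.smul_mem _ _ (Submodule.subset_span rfl)
    have hle : Module.finrank ℝ V ≤ 1 := by
      have h2 := finrank_span_le_card (R := ℝ) ({ξ} : Set V)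
      rw [hspan] at h2
      simpa using h2
    omega
  · exact hαξ
end
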